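/- arXiv:1011.1705 — 4 statements merged into one kernel-verified Lean document; each statement's English description precedes it below -/
import Mathlib

section
/- Let V be a nonzero finite-dimensional complex vector space, φ : V → V a linear map, B : V × V → ℂ a bilinear form, and d ∈ ℂ such that B(φ(x), φ(y)) = d·B(x, y) for all x, y ∈ V. Suppose L ∈ V and ρ ∈ ℂ satisfy φ(L) = ρ·L, and suppose there exists w ∈ V with B(L, w) ≠ 0. Then there exists an eigenvalue μ of φ with d = ρ·μ. (Core linear-algebra step in the proof of Lemma 2.9 of the paper: the identity deg(f)·L·L_s = ρ·λ_s·L·L_s obtained from a triangularizing basis.) -/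
/-- Core linear-algebra step in Lemma 2.9: if a bilinear form `B` transforms under a
linear map `φ` by a factor `d`, and `L` is a `ρ`-eigenvector of `φ` not in the kernel of
`B` on the left, then `d = ρ·μ` for some eigenvalue `μ` of `φ`. -/
theorem eigenvalue_factorization_of_bilinear
    {V : Type*} [AddCommGroup V] [Module ℂ V] [FiniteDimensional ℂ V] [Nontrivial V]
    (φ : V →ₗ[ℂ] V) (B : V →ₗ[ℂ] V →ₗ[ℂ] ℂ) (d : ℂ)
    (hB : ∀ x y : V, B (φ x) (φ y) = d * B x y)
    (L : V) (ρ : ℂ) (hL : φ L = ρ • L)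
    (hw : ∃ w : V, B L w ≠ 0) :
    ∃ μ : ℂ, Module.End.HasEigenvalue φ μ ∧ d = ρ * μ := by
  obtain ⟨w, hw⟩ := hw
  by_cases hρ : ρ = 0
  · -- then d = 0
    have hd : d = 0 := by
      have := hB L w
      rw [hL, hρ, zero_smul, map_zero] at this
      simp only [LinearMap.zero_apply] at this
      rcases mul_eq_zero.mp this.symm with h | h
      · exact h
      · exact absurd h hw
    obtain ⟨μ, hμ⟩ := Module.End.exists_eigenvalue (φ : Module.End ℂ V)
    exact ⟨μ, hμ, by rw [hd, hρ, zero_mul]⟩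
  · refine ⟨d / ρ, ?_, by field_simp⟩
    by_contra hcon
    rw [Module.End.hasEigenvalue_iff, not_ne_iff, Module.End.eigenspace_def] at hcon
    have hinj : Function.Injective (φ - (d / ρ) • (1 : Module.End ℂ V)) :=
      LinearMap.ker_eq_bot.mp hcon
    have hsurj : Function.Surjective (φ - (d / ρ) • (1 : Module.End ℂ V)) :=
      (LinearMap.injective_iff_surjective).mp hinj
    -- B L vanishes on the range of φ - (d/ρ)
    have key : ∀ y : V, B L ((φ - (d / ρ) • (1 : Module.End ℂ V)) y) = 0 := by
      intro y
      have h1 : ρ * B L (φ y) = d * B L y := by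
        have := hB L y
        rw [hL] at this
        simpa [smul_eq_mul] using this
      have h2 : B L (φ y) = (d / ρ) * B L y := by
        field_simp
        linear_combination h1
      simp [LinearMap.sub_apply, LinearMap.smul_apply, map_sub, map_smul, h2, smul_eq_mul]
    obtain ⟨y, hy⟩ := hsurj w
    exact hw (hy ▸ key y)
end

section
/- Let V be a nonzero finite-dimensional real vector space, φ : V → V a linear map, B : V × V → ℝ a bilinear form, and d ≥ 0 a real number such that B(φ(x), φ(y)) = d·B(x, y) for all x, y ∈ V. Suppose L ∈ V satisfies φ(L) = ρ(φ)·L, where ρ(φ) is the spectral radius of φ, and suppose there exists w ∈ V with B(L, w) ≠ 0. Then d ≤ ρ(φ)². (Abstract core of Lemma 2.9 of the paper, which bounds the degree of a surjective endomorphism of a normal projective surface by the square of the spectral radius of its pullback action on divisors.) -/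
/-- The spectral radius of a linear endomorphism of a finite-dimensional real vector
space: the maximum of `|μ|` over the complex roots `μ` of its characteristic polynomial. -/
noncomputable def realSpectralRadius {V : Type*} [AddCommGroup V] [Module ℝ V]
    [FiniteDimensional ℝ V] (φ : V →ₗ[ℝ] V) : ℝ :=
  sSup {r : ℝ | ∃ μ : ℂ, (φ.charpoly.map (algebraMap ℝ ℂ)).IsRoot μ ∧ ‖μ‖ = r}

/-!
Pairing with `L` gives the functional `f = B L`, and `ρ · f(φ y) = B(φ L, φ y) = d · f(y)`.
If `ρ(φ) = 0` then `d · f = 0`, so `d = 0`. Otherwise `f ∘ φ = (d/ρ) f` with `f ≠ 0`, so `d/ρ`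
is an eigenvalue of the transpose of `φ`, hence of `φ`, and therefore `d/ρ ≤ ρ(φ)`.
-/

open Module

/-- A nonzero linear map `f` with `f ∘ φ = c • f` makes `φ - c` non-surjective,
hence non-injective. -/
theorem Module.End.hasEigenvalue_of_comp_eq_smul {K V W : Type*} [Field K] [AddCommGroup V]
    [Module K V] [FiniteDimensional K V] [AddCommGroup W] [Module K W]
    {φ : End K V} {f : V →ₗ[K] W} {c : K} (hf : f ≠ 0) (hfφ : f ∘ₗ φ = c • f) :
    φ.HasEigenvalue c := by
  set ψ : End K V := φ - c • 1
  have hrange : LinearMap.range ψ ≤ LinearMap.ker f := by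
    rintro _ ⟨v, rfl⟩
    simpa [ψ, sub_eq_zero] using LinearMap.congr_fun hfφ v
  have hnot_surj : ¬ Function.Surjective ψ := fun hsurj => hf <| LinearMap.ker_eq_top.mp <|
    top_le_iff.mp (LinearMap.range_eq_top.mpr hsurj ▸ hrange)
  rw [End.hasEigenvalue_iff, End.eigenspace_def]
  exact fun hker => hnot_surj <| LinearMap.injective_iff_surjective.mp <|
    LinearMap.ker_eq_bot.mp hker

theorem abs_le_realSpectralRadius {V : Type*} [AddCommGroup V] [Module ℝ V]
    [FiniteDimensional ℝ V] {φ : V →ₗ[ℝ] V} {μ : ℝ} (hμ : End.HasEigenvalue φ μ) :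
    |μ| ≤ realSpectralRadius φ := by
  set p := φ.charpoly.map (algebraMap ℝ ℂ)
  have hroot : p.IsRoot (algebraMap ℝ ℂ μ) :=
    ((End.hasEigenvalue_iff_isRoot_charpoly φ μ).mp hμ).map
  have hbdd : BddAbove {r : ℝ | ∃ z : ℂ, p.IsRoot z ∧ ‖z‖ = r} := by
    have hp : p ≠ 0 := (φ.charpoly_monic.map (algebraMap ℝ ℂ)).ne_zero
    refine ((Polynomial.finite_setOfPred_isRoot hp).image norm).bddAbove.mono ?_
    rintro r ⟨z, hz, rfl⟩
    exact ⟨z, hz, rfl⟩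
  exact le_csSup hbdd ⟨_, hroot, by simp⟩

theorem degree_le_spectralRadius_sq_general
    {V : Type*} [AddCommGroup V] [Module ℝ V] [FiniteDimensional ℝ V]
    (φ : V →ₗ[ℝ] V) (B : V →ₗ[ℝ] V →ₗ[ℝ] ℝ) (d : ℝ)
    (hB : ∀ x y : V, B (φ x) (φ y) = d * B x y)
    (L : V) (hL : φ L = realSpectralRadius φ • L)
    (hw : ∃ w : V, B L w ≠ 0) :
    d ≤ (realSpectralRadius φ) ^ 2 := by
  obtain ⟨w, hw⟩ := hw
  set ρ := realSpectralRadius φ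
  have hBL : B L ≠ 0 := fun h => hw (by simp [h])
  have hL0 : L ≠ 0 := fun h => hBL (by simp [h])
  have hρ : 0 ≤ ρ := (abs_nonneg ρ).trans <| abs_le_realSpectralRadius <|
    End.hasEigenvalue_of_hasEigenvector ⟨End.mem_eigenspace_iff.mpr hL, hL0⟩
  have hpair : ∀ y, ρ * B L (φ y) = d * B L y := fun y => by simpa [hL] using hB L y
  rcases hρ.eq_or_lt with hρ0 | hρpos
  · have hd0 : d = 0 := by simpa [← hρ0, hw] using (hpair w).symm
    rw [hd0]; positivity
  · have hcomp : B L ∘ₗ φ = (d / ρ) • B L := by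
      ext y
      simp [div_mul_eq_mul_div, eq_div_iff hρpos.ne', ← hpair y, mul_comm]
    have hdρ : d / ρ ≤ ρ := (le_abs_self _).trans
      (abs_le_realSpectralRadius (End.hasEigenvalue_of_comp_eq_smul hBL hcomp))
    calc d = d / ρ * ρ := by field_simp
      _ ≤ ρ * ρ := by gcongr
      _ = ρ ^ 2 := (sq ρ).symm

/-- Abstract core of Lemma 2.9: if a bilinear form `B` transforms under `φ` by a factor
`d ≥ 0`, and `L` is an eigenvector of `φ` for the spectral radius with `B L w ≠ 0` for
some `w`, then `d ≤ ρ(φ)²`. -/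
theorem degree_le_spectralRadius_sq
    {V : Type*} [AddCommGroup V] [Module ℝ V] [FiniteDimensional ℝ V] [Nontrivial V]
    (φ : V →ₗ[ℝ] V) (B : V →ₗ[ℝ] V →ₗ[ℝ] ℝ) (d : ℝ) (hd : 0 ≤ d)
    (hB : ∀ x y : V, B (φ x) (φ y) = d * B x y)
    (L : V) (hL : φ L = realSpectralRadius φ • L)
    (hw : ∃ w : V, B L w ≠ 0) :
    d ≤ (realSpectralRadius φ) ^ 2 :=
  degree_le_spectralRadius_sq_general φ B d hB L hL hw
end

section
/- Let X be a Noetherian topological space, f : X → X a continuous surjective map that is also a closed map, and A ⊆ X a closed subset with f⁻¹(A) ⊆ A. Then the image under f of each irreducible component of A is again an irreducible component of A, the induced map on the (finite) set of irreducible components of A is a bijection, and there exists an integer n ≥ 1 such that the n-th iterate fⁿ satisfies fⁿ(Z) = Z for every irreducible component Z of A. (Abstraction of the second assertion of Lemma 2.10 of the paper: after replacing f by some power, h⁻¹(Dᵢ) = Dᵢ for every irreducible component Dᵢ of the invariant divisor D.) -/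
/-- `Z` is an irreducible component of the subset `A`: a maximal irreducible subset
of `A`. -/
def IsIrredCompOf {X : Type*} [TopologicalSpace X] (Z A : Set X) : Prop :=
  Z ⊆ A ∧ IsIrreducible Z ∧ ∀ Z' : Set X, Z' ⊆ A → IsIrreducible Z' → Z ⊆ Z' → Z' = Z

/-!
The preimages `f⁻ⁿ(A)` form a descending chain of closed sets; once it is stationary,
`f` maps the stable member onto itself, and pushing forward by `fⁿ` gives `f(A) = A`.
Then every component `W` of `A` lies in `A = f(A) = ⋃ f(Z)`, a finite union of closed
irreducible sets over the components `Z`, so `W ⊆ f(Z) ⊆ A` for one of them and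
maximality forces `W = f(Z)`. Thus `Z ↦ f(Z)` is onto the finite set of components, hence
a permutation of it, and some power of a permutation of a finite set is the identity.
-/

open Set TopologicalSpace

namespace Set

variable {α : Type*} {g : α → α} {s : Set α}

theorem Finite.bijOn_of_surjOn (hs : s.Finite) (h : SurjOn g s s) : BijOn g s s := by
  have himage : s = g '' s := eq_of_subset_of_ncard_le h (ncard_image_le hs) (hs.image g)
  have hmaps : MapsTo g s s := fun x hx => himage ▸ mem_image_of_mem g hx
  exact (hs.surjOn_iff_bijOn_of_mapsTo hmaps).1 h

theorem BijOn.exists_iterate_eqOn_id (hs : s.Finite) (h : BijOn g s s) :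
    ∃ n, 0 < n ∧ EqOn g^[n] id s := by
  have := hs.to_subtype
  obtain ⟨n, hn, hpow⟩ := (isOfFinOrder_of_finite (h.equiv g)).exists_pow_eq_one
  refine ⟨n, hn, fun x hx => ?_⟩
  have hx' := congrArg Subtype.val (Equiv.ext_iff.1 hpow ⟨x, hx⟩)
  rw [Equiv.Perm.coe_pow] at hx'
  change (h.mapsTo.restrict g s s)^[n] ⟨x, hx⟩ = x at hx'
  rwa [h.mapsTo.iterate_restrict] at hx'

end Set

section IrreducibleComponents

variable {X : Type*} [TopologicalSpace X]

theorem IsIrredCompOf.isClosed {Z A : Set X} (hA : IsClosed A) (hZ : IsIrredCompOf Z A) :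
    IsClosed Z := by
  obtain ⟨hZA, hZ, hmax⟩ := hZ
  rw [← hmax (closure Z) (hA.closure_subset_iff.2 hZA) hZ.closure subset_closure]
  exact isClosed_closure

theorem IsIrreducible.exists_mem_subset_of_subset_sUnion {T : Set X} (hT : IsIrreducible T)
    {S : Set (Set X)} (hS : S.Finite) (hSclosed : ∀ s ∈ S, IsClosed s) (hTS : T ⊆ ⋃₀ S) :
    ∃ s ∈ S, T ⊆ s := by
  lift S to Finset (Set X) using hS
  exact isIrreducible_iff_sUnion_isClosed.1 hT S hSclosed hTS

variable [NoetherianSpace X] {A : Set X}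

theorem exists_isIrredCompOf_superset (hA : IsClosed A) {T : Set X} (hT : IsIrreducible T)
    (hTA : T ⊆ A) : ∃ Z, IsIrredCompOf Z A ∧ T ⊆ Z := by
  obtain ⟨S, hSfin, hSclosed, hSirr, rfl⟩ :=
    NoetherianSpace.exists_finite_set_isClosed_irreducible hA
  have hcover {T : Set X} (hT : IsIrreducible T) (hTA : T ⊆ ⋃₀ S) : ∃ s ∈ S, T ⊆ s :=
    hT.exists_mem_subset_of_subset_sUnion hSfin hSclosed hTA
  obtain ⟨s, hs, hTs⟩ := hcover hT hTA
  obtain ⟨m, ⟨hmS, hsm⟩, hmax⟩ :=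
    hSfin.subset (sep_subset S (s ⊆ ·)) |>.exists_maximal ⟨s, hs, subset_rfl⟩
  refine ⟨m, ⟨subset_sUnion_of_mem hmS, hSirr m hmS, fun Z' hZ'A hZ' hmZ' => ?_⟩,
    hTs.trans hsm⟩
  obtain ⟨t, htS, hZ't⟩ := hcover hZ' hZ'A
  exact (hZ't.trans (hmax ⟨htS, hsm.trans (hmZ'.trans hZ't)⟩ (hmZ'.trans hZ't))).antisymm hmZ'

theorem sUnion_setOf_isIrredCompOf (hA : IsClosed A) : ⋃₀ {Z | IsIrredCompOf Z A} = A := by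
  refine (sUnion_subset fun Z hZ => hZ.1).antisymm fun x hx => ?_
  obtain ⟨Z, hZ, hxZ⟩ :=
    exists_isIrredCompOf_superset hA isIrreducible_singleton (singleton_subset_iff.2 hx)
  exact ⟨Z, hZ, hxZ rfl⟩

theorem finite_setOf_isIrredCompOf (hA : IsClosed A) : {Z | IsIrredCompOf Z A}.Finite := by
  obtain ⟨S, hSfin, hSclosed, hSirr, rfl⟩ :=
    NoetherianSpace.exists_finite_set_isClosed_irreducible hA
  refine hSfin.subset fun Z ⟨hZA, hZ, hmax⟩ => ?_
  obtain ⟨s, hs, hZs⟩ := hZ.exists_mem_subset_of_subset_sUnion hSfin hSclosed hZA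
  rwa [← hmax s (subset_sUnion_of_mem hs) (hSirr s hs) hZs]

theorem image_eq_of_preimage_subset {f : X → X} (hf : Continuous f)
    (hsurj : Function.Surjective f) (hA : IsClosed A) (hpre : f ⁻¹' A ⊆ A) : f '' A = A := by
  let B : ℕ → Closeds X := fun n => ⟨f^[n] ⁻¹' A, hA.preimage (hf.iterate n)⟩
  have hB : Antitone B := antitone_nat_of_succ_le fun n => by
    change f^[n + 1] ⁻¹' A ⊆ f^[n] ⁻¹' A
    rw [Function.iterate_succ', preimage_comp]
    exact preimage_mono hpre
  obtain ⟨N, hN⟩ := WellFoundedLT.antitone_chain_condition hB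
  have hfix : f ⁻¹' (f^[N] ⁻¹' A) = f^[N] ⁻¹' A := by
    rw [← preimage_comp, ← Function.iterate_succ]
    exact congrArg Closeds.carrier (hN (N + 1) N.le_succ).symm
  calc f '' A = f '' (f^[N] '' (f^[N] ⁻¹' A)) := by rw [image_preimage_eq _ (hsurj.iterate N)]
    _ = f^[N] '' (f '' (f ⁻¹' (f^[N] ⁻¹' A))) := by
      rw [hfix, ← image_comp, ← image_comp, ← Function.iterate_succ', Function.iterate_succ]
    _ = A := by rw [image_preimage_eq _ hsurj, image_preimage_eq _ (hsurj.iterate N)]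

theorem exists_isIrredCompOf_image_eq {f : X → X} (hf : Continuous f)
    (hclosed : IsClosedMap f) (hA : IsClosed A) (hfA : f '' A = A) {W : Set X}
    (hW : IsIrredCompOf W A) : ∃ Z, IsIrredCompOf Z A ∧ f '' Z = W := by
  have hcover : W ⊆ ⋃₀ (image f '' {Z | IsIrredCompOf Z A}) := by
    rw [← image_sUnion, sUnion_setOf_isIrredCompOf hA, hfA]
    exact hW.1
  obtain ⟨_, ⟨Z, hZ, rfl⟩, hWZ⟩ := hW.2.1.exists_mem_subset_of_subset_sUnion
    ((finite_setOf_isIrredCompOf hA).image _)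
    (forall_mem_image.2 fun Z hZ => hclosed Z (hZ.isClosed hA)) hcover
  exact ⟨Z, hZ, hW.2.2 _ (hfA ▸ image_mono hZ.1) (hZ.2.1.image f hf.continuousOn) hWZ⟩

end IrreducibleComponents

/-- Abstraction of the second assertion of Lemma 2.10: a continuous closed surjective
self-map `f` of a Noetherian space with `f⁻¹(A) ⊆ A` for a closed subset `A` permutes
the irreducible components of `A`, and some iterate `fⁿ` (`n ≥ 1`) fixes each of them. -/
theorem iterate_fixes_irreducible_components
    {X : Type*} [TopologicalSpace X] [TopologicalSpace.NoetherianSpace X]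
    (f : X → X) (hf : Continuous f) (hsurj : Function.Surjective f)
    (hclosed : IsClosedMap f)
    (A : Set X) (hA : IsClosed A) (hpre : f ⁻¹' A ⊆ A) :
    (∀ Z : Set X, IsIrredCompOf Z A → IsIrredCompOf (f '' Z) A) ∧
    (∀ Z₁ Z₂ : Set X, IsIrredCompOf Z₁ A → IsIrredCompOf Z₂ A →
      f '' Z₁ = f '' Z₂ → Z₁ = Z₂) ∧
    (∀ W : Set X, IsIrredCompOf W A → ∃ Z : Set X, IsIrredCompOf Z A ∧ f '' Z = W) ∧
    (∃ n : ℕ, 1 ≤ n ∧ ∀ Z : Set X, IsIrredCompOf Z A → f^[n] '' Z = Z) := by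
  have hsurjOn : SurjOn (image f) {Z | IsIrredCompOf Z A} {Z | IsIrredCompOf Z A} :=
    fun W hW => exists_isIrredCompOf_image_eq hf hclosed hA
      (image_eq_of_preimage_subset hf hsurj hA hpre) hW
  have hfin := finite_setOf_isIrredCompOf hA
  have hbij := hfin.bijOn_of_surjOn hsurjOn
  obtain ⟨n, hn, hfix⟩ := hbij.exists_iterate_eqOn_id hfin
  refine ⟨fun Z hZ => hbij.mapsTo hZ, fun Z₁ Z₂ h₁ h₂ h => hbij.injOn h₁ h₂ h, hsurjOn, n, hn,
    fun Z hZ => ?_⟩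
  rw [image_iterate_eq]
  exact hfix hZ
end

section
/- Let V be a nonzero finite-dimensional real vector space and C ⊆ V a closed convex cone that is strictly convex (C ∩ (−C) = {0}) and generates V as a vector space. Let φ : V → V be a linear map with φ(C) ⊆ C, let B : V × V → ℝ be a bilinear form, and let d ≥ 0 be a real number such that B(φ(x), φ(y)) = d·B(x, y) for all x, y ∈ V. Suppose there exists w ∈ V such that B(v, w) ≠ 0 for every v ∈ C with v ≠ 0. Then d ≤ ρ(φ)², where ρ(φ) is the spectral radius of φ. (Combined abstract form of Lemma 2.9 of the paper: Perron–Frobenius produces a nonzero nef eigenvector L with φ(L) = ρ(φ)·L, and pairing against an ample class yields deg(f) ≤ ρ(f*)².) -/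
open Polynomial Filter
open scoped Matrix Topology

attribute [local instance] Matrix.linftyOpNormedAddCommGroup Matrix.linftyOpNormedRing
  Matrix.linftyOpNormedAlgebra

theorem spectrum.eventually_norm_pow_le_of_spectralRadius_lt {A : Type*} [NormedRing A]
    [NormedAlgebra ℂ A] [CompleteSpace A] {a : A} {s : ℝ}
    (h : spectralRadius ℂ a < ENNReal.ofReal s) : ∀ᶠ k : ℕ in atTop, ‖a ^ k‖ ≤ s ^ k := by
  filter_upwards [(spectrum.pow_norm_pow_one_div_tendsto_nhds_spectralRadius a).eventually
    (gt_mem_nhds h), eventually_ne_atTop 0] with k hk hk0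
  rw [ENNReal.ofReal_lt_ofReal_iff', one_div] at hk
  calc ‖a ^ k‖ = (‖a ^ k‖ ^ (k⁻¹ : ℝ)) ^ k := (Real.rpow_inv_natCast_pow (norm_nonneg _) hk0).symm
    _ ≤ s ^ k := pow_le_pow_left₀ (by positivity) hk.1.le k

theorem Matrix.linfty_opNorm_map_eq {m n α β : Type*} [Fintype m] [Fintype n]
    [NormedAddCommGroup α] [NormedAddCommGroup β] (A : Matrix m n α) (f : α → β)
    (hf : ∀ a, ‖f a‖₊ = ‖a‖₊) : ‖A.map f‖ = ‖A‖ := by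
  simp only [Matrix.linfty_opNorm_def, Matrix.map_apply, hf]

theorem Matrix.spectralRadius_map_complex_le {n : Type*} [Fintype n] [DecidableEq n]
    (A : Matrix n n ℝ) {r : ℝ}
    (hr : ∀ μ : ℂ, (A.charpoly.map (algebraMap ℝ ℂ)).IsRoot μ → ‖μ‖ ≤ r) :
    spectralRadius ℂ (A.map (algebraMap ℝ ℂ)) ≤ ENNReal.ofReal r := by
  refine iSup₂_le fun μ hμ => ?_
  rw [Matrix.mem_spectrum_iff_isRoot_charpoly, Matrix.charpoly_map] at hμ
  exact (ofReal_norm μ).symm.trans_le (ENNReal.ofReal_le_ofReal (hr μ hμ))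

theorem Matrix.eventually_norm_pow_le {n : Type*} [Fintype n] [DecidableEq n]
    (A : Matrix n n ℝ) {r s : ℝ}
    (hr : ∀ μ : ℂ, (A.charpoly.map (algebraMap ℝ ℂ)).IsRoot μ → ‖μ‖ ≤ r) (hr0 : 0 ≤ r)
    (hrs : r < s) : ∀ᶠ k : ℕ in atTop, ‖A ^ k‖ ≤ s ^ k := by
  have hlt : spectralRadius ℂ (A.map (algebraMap ℝ ℂ)) < ENNReal.ofReal s :=
    (A.spectralRadius_map_complex_le hr).trans_lt
      ((ENNReal.ofReal_lt_ofReal_iff_of_nonneg hr0).2 hrs)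
  filter_upwards [spectrum.eventually_norm_pow_le_of_spectralRadius_lt hlt] with k hk
  rwa [← (algebraMap ℝ ℂ).mapMatrix_apply, ← map_pow, RingHom.mapMatrix_apply,
    Matrix.linfty_opNorm_map_eq _ _ (nnnorm_algebraMap' ℂ)] at hk

theorem Matrix.abs_le_sq_of_transpose_mul_mul_eq_smul {n : Type*} [Fintype n] [DecidableEq n]
    {A β : Matrix n n ℝ} (hβ : β ≠ 0) {d : ℝ} (h : Aᵀ * β * A = d • β) {r s : ℝ}
    (hr : ∀ μ : ℂ, (A.charpoly.map (algebraMap ℝ ℂ)).IsRoot μ → ‖μ‖ ≤ r) (hr0 : 0 ≤ r)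
    (hrs : r < s) : |d| ≤ s ^ 2 := by
  have hpow : ∀ k : ℕ, (A ^ k)ᵀ * β * A ^ k = d ^ k • β := by
    intro k
    induction k with
    | zero => simp
    | succ k ih =>
      calc (A ^ (k + 1))ᵀ * β * A ^ (k + 1) = Aᵀ * ((A ^ k)ᵀ * β * A ^ k) * A := by
            simp only [pow_succ, Matrix.transpose_mul, Matrix.mul_assoc]
        _ = d ^ (k + 1) • β := by
            rw [ih, Matrix.mul_smul, Matrix.smul_mul, h, smul_smul, pow_succ]
  have hrT : ∀ μ : ℂ, (Aᵀ.charpoly.map (algebraMap ℝ ℂ)).IsRoot μ → ‖μ‖ ≤ r := by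
    rwa [Matrix.charpoly_transpose]
  obtain ⟨k, hk0, hA, hAT⟩ := ((eventually_ne_atTop 0).and
    ((A.eventually_norm_pow_le hr hr0 hrs).and (Aᵀ.eventually_norm_pow_le hrT hr0 hrs))).exists
  have hβpos : 0 < ‖β‖ := norm_pos_iff.2 hβ
  have hs0 : 0 ≤ s := hr0.trans hrs.le
  have hgrowth : |d| ^ k * ‖β‖ ≤ (s ^ 2) ^ k * ‖β‖ :=
    calc |d| ^ k * ‖β‖ = ‖(A ^ k)ᵀ * β * A ^ k‖ := by
          rw [hpow, norm_smul, Real.norm_eq_abs, abs_pow]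
      _ ≤ ‖(A ^ k)ᵀ‖ * ‖β‖ * ‖A ^ k‖ := norm_mul₃_le
      _ ≤ s ^ k * ‖β‖ * s ^ k := by
          rw [Matrix.transpose_pow]
          gcongr
      _ = (s ^ 2) ^ k * ‖β‖ := by ring
  exact (pow_le_pow_iff_left₀ (abs_nonneg d) (sq_nonneg s) hk0).1
    (le_of_mul_le_mul_right hgrowth hβpos)

section RealSpectralRadius

variable {V : Type*} [AddCommGroup V] [Module ℝ V] [FiniteDimensional ℝ V]

theorem realSpectralRadius_nonneg (φ : V →ₗ[ℝ] V) : 0 ≤ realSpectralRadius φ :=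
  Real.sSup_nonneg fun _ ⟨μ, _, hμ⟩ => hμ ▸ norm_nonneg μ

theorem norm_le_realSpectralRadius (φ : V →ₗ[ℝ] V) {μ : ℂ}
    (hμ : (φ.charpoly.map (algebraMap ℝ ℂ)).IsRoot μ) : ‖μ‖ ≤ realSpectralRadius φ :=
  le_csSup ((finite_setOfPred_isRoot (φ.charpoly_monic.map (algebraMap ℝ ℂ)).ne_zero).image
    (‖·‖)).bddAbove ⟨μ, hμ, rfl⟩

theorem abs_le_realSpectralRadius_sq {φ : V →ₗ[ℝ] V} {B : V →ₗ[ℝ] V →ₗ[ℝ] ℝ} (hB0 : B ≠ 0)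
    {d : ℝ} (hB : ∀ x y, B (φ x) (φ y) = d * B x y) : |d| ≤ realSpectralRadius φ ^ 2 := by
  let b := Module.finBasis ℝ V
  have hmat : (LinearMap.toMatrix b b φ)ᵀ * LinearMap.toMatrix₂ b b B * LinearMap.toMatrix b b φ
      = d • LinearMap.toMatrix₂ b b B := by
    rw [← LinearMap.toMatrix₂_compl₁₂, ← map_smul]
    congr 1
    ext x y
    exact hB x y
  have hβ : LinearMap.toMatrix₂ b b B ≠ 0 := (LinearMap.toMatrix₂ b b).map_ne_zero_iff.2 hB0
  have hr : ∀ μ : ℂ, ((LinearMap.toMatrix b b φ).charpoly.map (algebraMap ℝ ℂ)).IsRoot μ →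
      ‖μ‖ ≤ realSpectralRadius φ := by
    rw [LinearMap.charpoly_toMatrix]
    exact fun μ => norm_le_realSpectralRadius φ
  have hsq : ∀ s > realSpectralRadius φ, |d| ≤ s ^ 2 := fun s hs =>
    Matrix.abs_le_sq_of_transpose_mul_mul_eq_smul hβ hmat hr (realSpectralRadius_nonneg φ) hs
  exact ge_of_tendsto (x := 𝓝[>] realSpectralRadius φ)
    (((continuous_pow 2).tendsto _).mono_left nhdsWithin_le_nhds)
    (eventually_nhdsWithin_of_forall hsq)

end RealSpectralRadius

theorem degree_le_spectralRadius_sq_of_cone_general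
    {V : Type*} [AddCommGroup V] [Module ℝ V] [FiniteDimensional ℝ V] [Nontrivial V]
    (C : Set V)
    (hspan : Submodule.span ℝ C = ⊤)
    (φ : V →ₗ[ℝ] V)
    (B : V →ₗ[ℝ] V →ₗ[ℝ] ℝ) (d : ℝ)
    (hB : ∀ x y : V, B (φ x) (φ y) = d * B x y)
    (hw : ∃ w : V, ∀ v ∈ C, v ≠ 0 → B v w ≠ 0) :
    d ≤ (realSpectralRadius φ) ^ 2 := by
  obtain ⟨w, hw⟩ := hw
  obtain ⟨u, huC, hu0⟩ : ∃ u ∈ C, u ≠ 0 := by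
    by_contra! h
    exact top_ne_bot (hspan ▸ Submodule.span_eq_bot.2 h)
  have hB0 : B ≠ 0 := fun h => hw u huC hu0 (by simp [h])
  exact (le_abs_self d).trans (abs_le_realSpectralRadius_sq hB0 hB)

/-- Combined abstract form of Lemma 2.9: if `φ` preserves a closed strictly convex
generating cone `C`, a bilinear form `B` transforms under `φ` by a factor `d ≥ 0`, and
some `w` pairs nontrivially with every nonzero element of `C`, then `d ≤ ρ(φ)²`. -/
theorem degree_le_spectralRadius_sq_of_cone
    {V : Type*} [AddCommGroup V] [Module ℝ V] [FiniteDimensional ℝ V] [Nontrivial V]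
    [TopologicalSpace V] [IsTopologicalAddGroup V] [ContinuousSMul ℝ V] [T2Space V]
    (C : Set V) (hclosed : IsClosed C)
    (hadd : ∀ x ∈ C, ∀ y ∈ C, x + y ∈ C)
    (hsmul : ∀ x ∈ C, ∀ t : ℝ, 0 ≤ t → t • x ∈ C)
    (hpointed : C ∩ (-C) = {0})
    (hspan : Submodule.span ℝ C = ⊤)
    (φ : V →ₗ[ℝ] V) (hφC : ∀ x ∈ C, φ x ∈ C)
    (B : V →ₗ[ℝ] V →ₗ[ℝ] ℝ) (d : ℝ) (hd : 0 ≤ d)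
    (hB : ∀ x y : V, B (φ x) (φ y) = d * B x y)
    (hw : ∃ w : V, ∀ v ∈ C, v ≠ 0 → B v w ≠ 0) :
    d ≤ (realSpectralRadius φ) ^ 2 :=
  degree_le_spectralRadius_sq_of_cone_general C hspan φ B d hB hw
end
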